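/- Let a₁, a₂ ≥ 2 be integers with a₁ ≡ 2 (mod 3) and a₂ ≡ 0 (mod 2), and let s = 1 if a₁ is odd and s = a₂ if a₁ is even. Then there exists a set A₀ ⊆ {1,…,a₁}×{1,…,a₂} with |A₀| = (a₁a₂ + a₁ + a₂ − 2)/3 whose 3-neighbour bootstrap closure in the grid [a₁]×[a₂] equals the set of all vertices of [a₁]×[a₂] except (1,1) and (a₁,s). -/

import Mathlib

/-! Seed the odd cells of the checkerboard (`0`-based coordinates), except that in each column
`x ≡ 2 (mod 3)` only the odd end cell is kept. Since `a₁ ≡ 2 (mod 3)`, the columns form pairs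
`3k, 3k + 1` separated by single columns `3k + 2`, and both extreme columns belong to pairs.
An even cell inside a paired column sees its two vertical neighbours and its neighbour in the
partner column seeded; an even end cell of a paired column away from the boundary sees three
seeded neighbours; and a column `3k + 2`, now flanked by two full columns, fills up from its
seeded end. Only the even corners, `(0, 0)` and `(a₁ - 1, s - 1)`, stay healthy: each has just
two neighbours. A paired column carries `a₂ / 2` seeds and a column `3k + 2` carries one. -/

namespace BP

/-- The `r`-neighbour bootstrap closure of `A₀` in `G`: the smallest set `S` containing `A₀`
such that every vertex with at least `r` neighbours in `S` belongs to `S`. -/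
def closure {V : Type*} (G : SimpleGraph V) (r : ℕ) (A₀ : Set V) : Set V :=
  ⋂₀ {S : Set V | A₀ ⊆ S ∧ ∀ v : V, r ≤ (G.neighborSet v ∩ S).ncard → v ∈ S}

/-- `A₀` percolates under the `r`-neighbour bootstrap process in `G`. -/
def Percolates {V : Type*} (G : SimpleGraph V) (r : ℕ) (A₀ : Set V) : Prop :=
  closure G r A₀ = Set.univ

/-- The minimum cardinality of a set percolating under the `r`-neighbour process in `G`. -/
noncomputable def minPerc {V : Type*} (G : SimpleGraph V) (r : ℕ) : ℕ :=
  sInf {n : ℕ | ∃ A₀ : Set V, Percolates G r A₀ ∧ A₀.ncard = n}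

/-- The two-dimensional grid graph `[a₁] × [a₂]` (vertices indexed from `0` via `Fin`,
representing the points `1, …, aᵢ`). -/
def grid2 (a₁ a₂ : ℕ) : SimpleGraph (Fin a₁ × Fin a₂) where
  Adj u v :=
    (u.2 = v.2 ∧ ((u.1 : ℕ) + 1 = (v.1 : ℕ) ∨ (v.1 : ℕ) + 1 = (u.1 : ℕ))) ∨
    (u.1 = v.1 ∧ ((u.2 : ℕ) + 1 = (v.2 : ℕ) ∨ (v.2 : ℕ) + 1 = (u.2 : ℕ)))
  symm := by
    constructor
    rintro u v (⟨h, h'⟩ | ⟨h, h'⟩)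
    · exact Or.inl ⟨h.symm, h'.symm⟩
    · exact Or.inr ⟨h.symm, h'.symm⟩
  loopless := by
    constructor
    rintro u (⟨-, h⟩ | ⟨-, h⟩) <;> omega

/-- `m(a₁,a₂;3)`: minimum size of a percolating set for the 3-neighbour process in the grid. -/
noncomputable def m2 (a₁ a₂ : ℕ) : ℕ := minPerc (grid2 a₁ a₂) 3

section general

variable {V : Type*} {G : SimpleGraph V} {r : ℕ} {A₀ S : Set V}

lemma subset_closure : A₀ ⊆ closure G r A₀ :=
  fun _ hv => Set.mem_sInter.mpr fun _ hS => hS.1 hv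

lemma closure_subset (hA₀ : A₀ ⊆ S) (hS : ∀ v, r ≤ (G.neighborSet v ∩ S).ncard → v ∈ S) :
    closure G r A₀ ⊆ S :=
  Set.sInter_subset_of_mem ⟨hA₀, hS⟩

lemma closure_subset_of_ncard_neighborSet_lt [Finite V] (hA₀ : A₀ ⊆ S)
    (hS : ∀ v ∉ S, (G.neighborSet v).ncard < r) : closure G r A₀ ⊆ S := by
  refine closure_subset hA₀ fun v hv => ?_
  by_contra hvS
  have := Set.ncard_le_ncard (Set.inter_subset_left (t := S)) (G.neighborSet v).toFinite
  exact absurd (hS v hvS) (by omega)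

lemma mem_closure_of_le_ncard [Finite V] {v : V}
    (h : r ≤ (G.neighborSet v ∩ closure G r A₀).ncard) : v ∈ closure G r A₀ :=
  Set.mem_sInter.mpr fun S hS => hS.2 v <| h.trans <|
    Set.ncard_le_ncard (fun _ hu => ⟨hu.1, Set.sInter_subset_of_mem hS hu.2⟩)

lemma mem_closure_of_three [Finite V] {v u₁ u₂ u₃ : V}
    (h₁ : G.Adj v u₁) (h₂ : G.Adj v u₂) (h₃ : G.Adj v u₃)
    (h₁₂ : u₁ ≠ u₂) (h₁₃ : u₁ ≠ u₃) (h₂₃ : u₂ ≠ u₃)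
    (m₁ : u₁ ∈ closure G 3 A₀) (m₂ : u₂ ∈ closure G 3 A₀) (m₃ : u₃ ∈ closure G 3 A₀) :
    v ∈ closure G 3 A₀ := by
  refine mem_closure_of_le_ncard ?_
  calc 3 = ({u₁, u₂, u₃} : Set V).ncard :=
        (Set.ncard_eq_three.mpr ⟨u₁, u₂, u₃, h₁₂, h₁₃, h₂₃, rfl⟩).symm
    _ ≤ _ := Set.ncard_le_ncard <| by
        rintro u (rfl | rfl | rfl)
        exacts [⟨h₁, m₁⟩, ⟨h₂, m₂⟩, ⟨h₃, m₃⟩]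

end general

section grid

variable {a₁ a₂ : ℕ}

/-- Membership in a set of grid vertices, read in `ℕ`-coordinates; false outside the grid. -/
def Occupied (A : Set (Fin a₁ × Fin a₂)) (x y : ℕ) : Prop :=
  ∃ (hx : x < a₁) (hy : y < a₂), (⟨x, hx⟩, ⟨y, hy⟩) ∈ A

lemma occupied_iff_mem {A : Set (Fin a₁ × Fin a₂)} {v : Fin a₁ × Fin a₂} :
    Occupied A v.1 v.2 ↔ v ∈ A :=
  ⟨fun ⟨_, _, h⟩ => h, fun h => ⟨v.1.2, v.2.2, h⟩⟩

lemma Occupied.mono {A B : Set (Fin a₁ × Fin a₂)} (hAB : A ⊆ B) {x y : ℕ}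
    (h : Occupied A x y) : Occupied B x y :=
  let ⟨hx, hy, hA⟩ := h
  ⟨hx, hy, hAB hA⟩

variable {A₀ : Set (Fin a₁ × Fin a₂)}

lemma Occupied.closure_of_vertical {x x' y : ℕ} (hx' : x' + 1 = x ∨ x + 1 = x')
    (hbelow : Occupied (closure (grid2 a₁ a₂) 3 A₀) x y)
    (habove : Occupied (closure (grid2 a₁ a₂) 3 A₀) x (y + 2))
    (hside : Occupied (closure (grid2 a₁ a₂) 3 A₀) x' (y + 1)) :
    Occupied (closure (grid2 a₁ a₂) 3 A₀) x (y + 1) := by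
  obtain ⟨hx, hy, hb⟩ := hbelow
  obtain ⟨_, hy₂, ha⟩ := habove
  obtain ⟨_, _, hs⟩ := hside
  refine ⟨hx, by omega, mem_closure_of_three ?_ ?_ ?_ ?_ ?_ ?_ hb ha hs⟩ <;>
    grind [grid2]

lemma Occupied.closure_of_horizontal {x y y' : ℕ} (hy' : y' + 1 = y ∨ y + 1 = y')
    (hleft : Occupied (closure (grid2 a₁ a₂) 3 A₀) x y)
    (hright : Occupied (closure (grid2 a₁ a₂) 3 A₀) (x + 2) y)
    (hside : Occupied (closure (grid2 a₁ a₂) 3 A₀) (x + 1) y') :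
    Occupied (closure (grid2 a₁ a₂) 3 A₀) (x + 1) y := by
  obtain ⟨hx, hy, hl⟩ := hleft
  obtain ⟨hx₂, _, hr⟩ := hright
  obtain ⟨_, _, hs⟩ := hside
  refine ⟨by omega, hy, mem_closure_of_three ?_ ?_ ?_ ?_ ?_ ?_ hl hr hs⟩ <;>
    grind [grid2]

lemma Occupied.closure_of_column {x y₀ : ℕ}
    (hleft : ∀ y < a₂, Occupied (closure (grid2 a₁ a₂) 3 A₀) x y)
    (hright : ∀ y < a₂, Occupied (closure (grid2 a₁ a₂) 3 A₀) (x + 2) y)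
    (h₀ : Occupied (closure (grid2 a₁ a₂) 3 A₀) (x + 1) y₀) {y : ℕ} (hy : y < a₂) :
    Occupied (closure (grid2 a₁ a₂) 3 A₀) (x + 1) y := by
  rcases le_total y₀ y with hle | hle
  · induction y, hle using Nat.le_induction with
    | base => exact h₀
    | succ y _ ih =>
      exact .closure_of_horizontal (.inl rfl) (hleft _ hy) (hright _ hy) (ih (by omega))
  · obtain ⟨k, rfl⟩ := Nat.exists_eq_add_of_le hle
    clear hle
    induction k generalizing y with
    | zero => exact h₀
    | succ k ih =>
      have hy' : y + 1 < a₂ := by obtain ⟨_, h, _⟩ := h₀; omega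
      exact .closure_of_horizontal (.inr rfl) (hleft _ hy) (hright _ hy)
        (ih hy' (by rwa [Nat.add_right_comm]))

def seed (a₁ a₂ : ℕ) : Set (Fin a₁ × Fin a₂) :=
  {v | ((v.1 : ℕ) + v.2) % 2 = 1 ∧ ((v.1 : ℕ) % 3 ≠ 2 ∨ (v.2 : ℕ) = 0 ∨ (v.2 : ℕ) + 1 = a₂)}

lemma occupied_closure_seed {x y : ℕ} (hx : x < a₁) (hy : y < a₂) (hodd : (x + y) % 2 = 1)
    (hcol : x % 3 ≠ 2 ∨ y = 0 ∨ y + 1 = a₂) :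
    Occupied (closure (grid2 a₁ a₂) 3 (seed a₁ a₂)) x y :=
  Occupied.mono subset_closure ⟨hx, hy, hodd, hcol⟩

variable (hm₁ : a₁ % 3 = 2)
include hm₁

lemma occupied_closure_seed_of_interior {x y : ℕ} (hx : x < a₁) (hcol : x % 3 ≠ 2)
    (hy₀ : 1 ≤ y) (hy₁ : y + 1 < a₂) :
    Occupied (closure (grid2 a₁ a₂) 3 (seed a₁ a₂)) x y := by
  by_cases hodd : (x + y) % 2 = 1
  · exact occupied_closure_seed hx (by omega) hodd (Or.inl hcol)
  obtain ⟨y, rfl⟩ : ∃ y', y = y' + 1 := ⟨y - 1, by omega⟩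
  -- the horizontal neighbour chosen lies in the other column of the pair `3k, 3k + 1`
  obtain ⟨x', hx', hx'col⟩ : ∃ x', (x' + 1 = x ∨ x + 1 = x') ∧ x' < a₁ ∧ x' % 3 ≠ 2 :=
    if h : x % 3 = 0 then ⟨x + 1, by omega⟩ else ⟨x - 1, by omega⟩
  exact Occupied.closure_of_vertical hx'
    (occupied_closure_seed hx (by omega) (by omega) (Or.inl hcol))
    (occupied_closure_seed hx hy₁ (by omega) (Or.inl hcol))
    (occupied_closure_seed hx'col.1 (by omega) (by omega) (Or.inl hx'col.2))

lemma occupied_closure_seed_of_good_column (h₂ : 2 ≤ a₂) {x y : ℕ} (hcol : x % 3 ≠ 2)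
    (hx₀ : 1 ≤ x) (hx₁ : x + 1 < a₁) (hy : y < a₂) :
    Occupied (closure (grid2 a₁ a₂) 3 (seed a₁ a₂)) x y := by
  by_cases hint : 1 ≤ y ∧ y + 1 < a₂
  · exact occupied_closure_seed_of_interior hm₁ (by omega) hcol hint.1 hint.2
  by_cases hodd : (x + y) % 2 = 1
  · exact occupied_closure_seed hx₁.le hy hodd (Or.inl hcol)
  obtain ⟨x, rfl⟩ : ∃ x', x = x' + 1 := ⟨x - 1, by omega⟩
  obtain ⟨y', hy', hy'a₂⟩ : ∃ y', (y' + 1 = y ∨ y + 1 = y') ∧ y' < a₂ :=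
    if h : y = 0 then ⟨1, by omega⟩ else ⟨y - 1, by omega⟩
  exact Occupied.closure_of_horizontal hy'
    (occupied_closure_seed (by omega) hy (by omega) (by omega))
    (occupied_closure_seed hx₁ hy (by omega) (by omega))
    (occupied_closure_seed (by omega) hy'a₂ (by omega) (Or.inl hcol))

lemma occupied_closure_seed_of_bad_column (h₂ : 2 ≤ a₂) (hm₂ : a₂ % 2 = 0) {x y : ℕ}
    (hcol : x % 3 = 2) (hx : x < a₁) (hy : y < a₂) :
    Occupied (closure (grid2 a₁ a₂) 3 (seed a₁ a₂)) x y := by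
  obtain ⟨x, rfl⟩ : ∃ x', x = x' + 1 := ⟨x - 1, by omega⟩
  -- the column's single seed sits at whichever end has odd parity, as `a₂` is even
  obtain ⟨y₀, hy₀, hy₀odd, hy₀end⟩ : ∃ y₀, y₀ < a₂ ∧ (x + 1 + y₀) % 2 = 1 ∧
      (y₀ = 0 ∨ y₀ + 1 = a₂) :=
    if h : x % 2 = 0 then ⟨0, by omega⟩ else ⟨a₂ - 1, by omega⟩
  exact Occupied.closure_of_column
    (fun _ hy => occupied_closure_seed_of_good_column hm₁ h₂ (by omega) (by omega) (by omega) hy)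
    (fun _ hy => occupied_closure_seed_of_good_column hm₁ h₂ (by omega) (by omega) (by omega) hy)
    (occupied_closure_seed hx hy₀ hy₀odd (Or.inr hy₀end)) hy

lemma occupied_closure_seed_of_odd_or_not_corner (h₂ : 2 ≤ a₂) (hm₂ : a₂ % 2 = 0) {x y : ℕ}
    (hx : x < a₁) (hy : y < a₂)
    (h : (x + y) % 2 = 1 ∨ ¬((x = 0 ∨ x + 1 = a₁) ∧ (y = 0 ∨ y + 1 = a₂))) :
    Occupied (closure (grid2 a₁ a₂) 3 (seed a₁ a₂)) x y := by
  by_cases hcol : x % 3 = 2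
  · exact occupied_closure_seed_of_bad_column hm₁ h₂ hm₂ hcol hx hy
  by_cases hx' : 1 ≤ x ∧ x + 1 < a₁
  · exact occupied_closure_seed_of_good_column hm₁ h₂ hcol hx'.1 hx'.2 hy
  by_cases hodd : (x + y) % 2 = 1
  · exact occupied_closure_seed hx hy hodd (Or.inl hcol)
  · exact occupied_closure_seed_of_interior hm₁ hx hcol (by omega) (by omega)

end grid

def IsCorner {a₁ a₂ : ℕ} (v : Fin a₁ × Fin a₂) : Prop :=
  ((v.1 : ℕ) = 0 ∨ (v.1 : ℕ) + 1 = a₁) ∧ ((v.2 : ℕ) = 0 ∨ (v.2 : ℕ) + 1 = a₂)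

lemma IsCorner.ncard_neighborSet_le_two {a₁ a₂ : ℕ} {v : Fin a₁ × Fin a₂} (hv : IsCorner v) :
    ((grid2 a₁ a₂).neighborSet v).ncard ≤ 2 := by
  set row := {u | (grid2 a₁ a₂).Adj v u ∧ u.2 = v.2}
  set col := {u | (grid2 a₁ a₂).Adj v u ∧ u.1 = v.1}
  have hrow : row.ncard ≤ 1 := (Set.ncard_le_one_iff).mpr fun ⟨hu, hu₂⟩ ⟨hu', hu'₂⟩ =>
    Prod.ext (Fin.ext (by simp only [IsCorner, grid2] at *; grind)) (hu₂.trans hu'₂.symm)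
  have hcol : col.ncard ≤ 1 := (Set.ncard_le_one_iff).mpr fun ⟨hu, hu₁⟩ ⟨hu', hu'₁⟩ =>
    Prod.ext (hu₁.trans hu'₁.symm) (Fin.ext (by simp only [IsCorner, grid2] at *; grind))
  calc ((grid2 a₁ a₂).neighborSet v).ncard ≤ (row ∪ col).ncard :=
        Set.ncard_le_ncard fun u hu => by
          rcases id hu with ⟨h, -⟩ | ⟨h, -⟩
          exacts [.inl ⟨hu, h.symm⟩, .inr ⟨hu, h.symm⟩]
    _ ≤ row.ncard + col.ncard := Set.ncard_union_le _ _
    _ ≤ 2 := by omega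

lemma closure_seed_eq {a₁ a₂ : ℕ} (h₂ : 2 ≤ a₂) (hm₁ : a₁ % 3 = 2) (hm₂ : a₂ % 2 = 0) :
    closure (grid2 a₁ a₂) 3 (seed a₁ a₂) = {v | ((v.1 : ℕ) + v.2) % 2 = 1 ∨ ¬IsCorner v} := by
  refine (closure_subset_of_ncard_neighborSet_lt (fun v hv => .inl hv.1) fun v hv => ?_).antisymm
    fun v hv => occupied_iff_mem.mp
      (occupied_closure_seed_of_odd_or_not_corner hm₁ h₂ hm₂ v.1.2 v.2.2 hv)
  have hv : IsCorner v := of_not_not (not_or.mp hv).2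
  exact hv.ncard_neighborSet_le_two.trans_lt (by norm_num)

open Finset in
lemma sum_range_two_mul_ite_odd_add (x c : ℕ) :
    ∑ y ∈ range (2 * c), (if (x + y) % 2 = 1 then 1 else 0) = c := by
  induction c with
  | zero => simp
  | succ c ih =>
    rw [Nat.mul_succ, sum_range_succ, sum_range_succ, ih]
    split_ifs <;> omega

open Finset in
lemma sum_range_three_mul_add_two_ite (k c : ℕ) :
    ∑ x ∈ range (3 * k + 2), (if x % 3 = 2 then 1 else c) = (2 * k + 2) * c + k := by
  induction k with
  | zero => simp [sum_range_succ, two_mul]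
  | succ k ih =>
    rw [show 3 * (k + 1) + 2 = 3 * k + 2 + 1 + 1 + 1 by ring, sum_range_succ, sum_range_succ,
      sum_range_succ, ih, if_pos (by omega), if_neg (by omega), if_neg (by omega)]
    ring

open Finset in
lemma three_mul_ncard_seed {a₁ a₂ : ℕ} (h₂ : 2 ≤ a₂) (hm₁ : a₁ % 3 = 2) (hm₂ : a₂ % 2 = 0) :
    3 * (seed a₁ a₂).ncard = a₁ * a₂ + a₁ + a₂ - 2 := by
  obtain ⟨k, rfl⟩ : ∃ k, a₁ = 3 * k + 2 := ⟨a₁ / 3, by omega⟩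
  obtain ⟨c, rfl⟩ : ∃ c, a₂ = 2 * c := ⟨a₂ / 2, by omega⟩
  have hcolumn (x : ℕ) : ∑ y ∈ range (2 * c),
      (if (x + y) % 2 = 1 ∧ (x % 3 ≠ 2 ∨ y = 0 ∨ y + 1 = 2 * c) then 1 else 0) =
      if x % 3 = 2 then 1 else c := by
    split_ifs with hx
    · -- the single seed of such a column is its end cell of odd parity
      rw [sum_congr rfl fun y hy => if_congr (Q := (if x % 2 = 1 then 0 else 2 * c - 1) = y)
        (by simp only [mem_range] at hy; split_ifs <;> omega) rfl rfl, sum_ite_eq]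
      simp only [mem_range]
      split_ifs <;> omega
    · exact (sum_congr rfl fun y _ => if_congr (by omega) rfl rfl).trans
        (sum_range_two_mul_ite_odd_add x c)
  have hsum : (seed (3 * k + 2) (2 * c)).ncard = ∑ x ∈ range (3 * k + 2), ∑ y ∈ range (2 * c),
      (if (x + y) % 2 = 1 ∧ (x % 3 ≠ 2 ∨ y = 0 ∨ y + 1 = 2 * c) then 1 else 0) := by
    simp only [seed, Set.ncard_eq_toFinset_card', Set.toFinset_ofPred, card_filter,
      Fintype.sum_prod_type, sum_range]
  rw [hsum, sum_congr rfl fun x _ => hcolumn x, sum_range_three_mul_add_two_ite]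
  refine Nat.eq_sub_of_add_eq ?_
  ring

theorem fatter_construction_general (a₁ a₂ : ℕ) (h₂ : 2 ≤ a₂)
    (hm₁ : a₁ % 3 = 2) (hm₂ : a₂ % 2 = 0) (s : ℕ)
    (hs : s = if a₁ % 2 = 1 then 1 else a₂) :
    ∃ A₀ : Set (Fin a₁ × Fin a₂),
      3 * A₀.ncard = a₁ * a₂ + a₁ + a₂ - 2 ∧
      closure (grid2 a₁ a₂) 3 A₀ =
        {v : Fin a₁ × Fin a₂ |
          ¬((v.1 : ℕ) + 1 = 1 ∧ (v.2 : ℕ) + 1 = 1) ∧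
          ¬((v.1 : ℕ) + 1 = a₁ ∧ (v.2 : ℕ) + 1 = s)} := by
  refine ⟨seed a₁ a₂, three_mul_ncard_seed h₂ hm₁ hm₂, ?_⟩
  rw [closure_seed_eq h₂ hm₁ hm₂]
  ext ⟨⟨x, hx⟩, ⟨y, hy⟩⟩
  -- the even corners are `(0, 0)` and `(a₁ - 1, s - 1)`
  simp only [IsCorner, Set.mem_ofPred_eq, hs]
  split_ifs <;> omega

/-- **Theorem (Statement 8).** For `a₁ ≡ 2 (mod 3)` and `a₂` even there is a set of size
`(a₁a₂+a₁+a₂-2)/3` whose 3-neighbour closure is everything except `(1,1)` and `(a₁,s)`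
(in 1-based coordinates). -/
theorem fatter_construction (a₁ a₂ : ℕ) (h₁ : 2 ≤ a₁) (h₂ : 2 ≤ a₂)
    (hm₁ : a₁ % 3 = 2) (hm₂ : a₂ % 2 = 0) (s : ℕ)
    (hs : s = if a₁ % 2 = 1 then 1 else a₂) :
    ∃ A₀ : Set (Fin a₁ × Fin a₂),
      3 * A₀.ncard = a₁ * a₂ + a₁ + a₂ - 2 ∧
      closure (grid2 a₁ a₂) 3 A₀ =
        {v : Fin a₁ × Fin a₂ |
          ¬((v.1 : ℕ) + 1 = 1 ∧ (v.2 : ℕ) + 1 = 1) ∧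
          ¬((v.1 : ℕ) + 1 = a₁ ∧ (v.2 : ℕ) + 1 = s)} :=
  fatter_construction_general a₁ a₂ h₂ hm₁ hm₂ s hs

end BP
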